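/- The family of elements e1, e2, (ad e1)^n(e11), (ad e2)^n(e22), (ad e1)^n(e12) (for n ranging over the natural numbers) is a ℚ-vector space basis of the polylogarithmic Lie algebra L^PL; in particular these elements are pairwise distinct, linearly independent, and span L^PL. -/

import Mathlib

inductive Gamma : Type
  | e1 | e11 | e2 | e22 | e12
deriving DecidableEq

noncomputable section

abbrev FL : Type := FreeLieAlgebra ℚ Gamma

/-- The five generators of the free Lie algebra. -/
def gen (x : Gamma) : FL := FreeLieAlgebra.of ℚ x

/-- The defining relations of the Lie algebra `L`. -/
def relSet : Set FL :=
  {⁅gen .e1, gen .e2⁆, ⁅gen .e11, gen .e2⁆, ⁅gen .e1, gen .e22⁆,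
   ⁅gen .e11, gen .e22⁆ - ⁅gen .e2 - gen .e1, gen .e12⁆,
   (-⁅gen .e11, gen .e12⁆) - ⁅gen .e2 - gen .e1, gen .e12⁆,
   ⁅gen .e22, gen .e12⁆ - ⁅gen .e2 - gen .e1, gen .e12⁆}

/-- The Lie ideal generated by the relations. -/
def relIdeal : LieIdeal ℚ FL := LieSubmodule.lieSpan ℚ FL relSet

/-- The Lie algebra `L`. -/
abbrev Lquot : Type := FL ⧸ relIdeal

/-- Projection `L(Γ) → L`. -/
def mkL : FL → Lquot := LieSubmodule.Quotient.mk (N := relIdeal)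

/-- The Lie ideal `N` of `L` generated by `e11`, `e22`, `e12`. -/
def NIdeal : LieIdeal ℚ Lquot :=
  LieSubmodule.lieSpan ℚ Lquot {mkL (gen .e11), mkL (gen .e22), mkL (gen .e12)}

/-- The Lie ideal `[N, N]`. -/
def NN : LieIdeal ℚ Lquot := ⁅NIdeal, NIdeal⁆

/-- The polylogarithmic Lie algebra `L^PL = L/[N,N]`. -/
abbrev LPL : Type := Lquot ⧸ NN

/-- Projection `L(Γ) → L^PL`. -/
def pl (x : FL) : LPL := LieSubmodule.Quotient.mk (N := NN) (mkL x)

def E1 : LPL := pl (gen .e1)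
def E11 : LPL := pl (gen .e11)
def E2 : LPL := pl (gen .e2)
def E22 : LPL := pl (gen .e22)
def E12 : LPL := pl (gen .e12)

/-- The adjoint action `ad z : w ↦ ⁅z, w⁆` as a linear endomorphism of `L^PL`. -/
def adPL (z : LPL) : Module.End ℚ LPL := LieAlgebra.ad ℚ LPL z

end
/-- Index type for the claimed basis of `L^PL`. -/
inductive BIdx : Type
  | E1 : BIdx
  | E2 : BIdx
  | A : ℕ → BIdx   -- `(ad e1)^n (e11)`
  | B : ℕ → BIdx   -- `(ad e2)^n (e22)`
  | C : ℕ → BIdx   -- `(ad e1)^n (e12)`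

/-- The claimed basis family. -/
noncomputable def basisFam : BIdx → LPL
  | .E1 => E1
  | .E2 => E2
  | .A n => (adPL E1 ^ n) E11
  | .B n => (adPL E2 ^ n) E22
  | .C n => (adPL E1 ^ n) E12


deriving instance DecidableEq for BIdx

namespace PLProof
abbrev M : Type := BIdx →₀ ℚ
noncomputable section

def d1 : BIdx → M
  | .A n => Finsupp.single (.A (n+1)) 1
  | .C n => Finsupp.single (.C (n+1)) 1
  | _ => 0

def d2 : BIdx → M
  | .B n => Finsupp.single (.B (n+1)) 1
  | .C n => Finsupp.single (.C (n+1)) 1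
  | _ => 0

def D1 : M →ₗ[ℚ] M := Finsupp.linearCombination ℚ d1
def D2 : M →ₗ[ℚ] M := Finsupp.linearCombination ℚ d2
def c1 : M →ₗ[ℚ] ℚ := Finsupp.lapply .E1
def c2 : M →ₗ[ℚ] ℚ := Finsupp.lapply .E2

lemma c1_D1 (m : M) : c1 (D1 m) = 0 := by
  have h : c1 ∘ₗ D1 = 0 := Finsupp.lhom_ext fun a b => by
    cases a <;> simp [c1, D1, d1, Finsupp.single_apply]
  exact DFunLike.congr_fun h m
lemma c1_D2 (m : M) : c1 (D2 m) = 0 := by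
  have h : c1 ∘ₗ D2 = 0 := Finsupp.lhom_ext fun a b => by
    cases a <;> simp [c1, D2, d2, Finsupp.single_apply]
  exact DFunLike.congr_fun h m
lemma c2_D1 (m : M) : c2 (D1 m) = 0 := by
  have h : c2 ∘ₗ D1 = 0 := Finsupp.lhom_ext fun a b => by
    cases a <;> simp [c2, D1, d1, Finsupp.single_apply]
  exact DFunLike.congr_fun h m
lemma c2_D2 (m : M) : c2 (D2 m) = 0 := by
  have h : c2 ∘ₗ D2 = 0 := Finsupp.lhom_ext fun a b => by
    cases a <;> simp [c2, D2, d2, Finsupp.single_apply]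
  exact DFunLike.congr_fun h m

lemma D1_D2 (m : M) : D1 (D2 m) = D2 (D1 m) := by
  have h : D1 ∘ₗ D2 = D2 ∘ₗ D1 := Finsupp.lhom_ext fun a b => by
    cases a <;> simp [D1, D2, d1, d2]
  exact DFunLike.congr_fun h m

/-- The model bracket. -/
def br (x y : M) : M := c1 x • D1 y + c2 x • D2 y - c1 y • D1 x - c2 y • D2 x

lemma c1_br (x y : M) : c1 (br x y) = 0 := by
  simp [br, map_add, map_sub, map_smul, c1_D1, c1_D2]
lemma c2_br (x y : M) : c2 (br x y) = 0 := by
  simp [br, map_add, map_sub, map_smul, c2_D1, c2_D2]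

instance : LieRing M where
  bracket := br
  add_lie x y z := by simp only [br, map_add, add_smul, smul_add]; abel
  lie_add x y z := by simp only [br, map_add, add_smul, smul_add]; abel
  lie_self x := by simp only [br]; abel
  leibniz_lie x y z := by
    show br x (br y z) = br (br x y) z + br y (br x z)
    simp only [br, c1_br, c2_br, c1_D1, c1_D2, c2_D1, c2_D2, map_add, map_sub, map_smul,
      zero_smul, smul_zero, add_zero, sub_zero, zero_sub, smul_add, smul_sub, smul_smul]
    rw [show D1 (D2 x) = D2 (D1 x) from D1_D2 x, show D1 (D2 y) = D2 (D1 y) from D1_D2 y,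
      show D1 (D2 z) = D2 (D1 z) from D1_D2 z]
    module

instance : LieAlgebra ℚ M where
  lie_smul t x y := by
    show br x (t • y) = t • br x y
    simp only [br, map_smul, smul_add, smul_sub, smul_smul, smul_eq_mul, mul_comm]

lemma lie_def (x y : M) : ⁅x, y⁆ = br x y := rfl

def sng (i : BIdx) : M := Finsupp.single i 1

lemma c1_sng (i : BIdx) : c1 (sng i) = if i = BIdx.E1 then 1 else 0 := by
  simp [c1, sng, Finsupp.single_apply]
lemma c2_sng (i : BIdx) : c2 (sng i) = if i = BIdx.E2 then 1 else 0 := by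
  simp [c2, sng, Finsupp.single_apply]
lemma D1_sng (i : BIdx) : D1 (sng i) = d1 i := by simp [D1, sng]
lemma D2_sng (i : BIdx) : D2 (sng i) = d2 i := by simp [D2, sng]

lemma lie_e1 (m : M) : ⁅sng .E1, m⁆ = D1 m := by
  rw [lie_def, br, c1_sng, c2_sng, D1_sng, D2_sng]
  simp [d1, d2, map_zero, c1, c2]
lemma lie_e2 (m : M) : ⁅sng .E2, m⁆ = D2 m := by
  rw [lie_def, br, c1_sng, c2_sng, D1_sng, D2_sng]
  simp [d1, d2, map_zero, c1, c2]

lemma lie_low (x y : M) (hx1 : c1 x = 0) (hx2 : c2 x = 0) (hy1 : c1 y = 0) (hy2 : c2 y = 0) :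
    ⁅x, y⁆ = 0 := by
  rw [lie_def, br, hx1, hx2, hy1, hy2]; simp

lemma ad_e1 : LieAlgebra.ad ℚ M (sng .E1) = D1 :=
  LinearMap.ext fun m => by rw [LieAlgebra.ad_apply]; exact lie_e1 m
lemma ad_e2 : LieAlgebra.ad ℚ M (sng .E2) = D2 :=
  LinearMap.ext fun m => by rw [LieAlgebra.ad_apply]; exact lie_e2 m

lemma D1_pow_A (n k : ℕ) : (D1 ^ n) (sng (.A k)) = sng (.A (k + n)) := by
  induction n with
  | zero => simp
  | succ n ih => rw [pow_succ', Module.End.mul_apply, ih]; simp [D1, sng, d1, Nat.add_assoc]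
lemma D2_pow_B (n k : ℕ) : (D2 ^ n) (sng (.B k)) = sng (.B (k + n)) := by
  induction n with
  | zero => simp
  | succ n ih => rw [pow_succ', Module.End.mul_apply, ih]; simp [D2, sng, d2, Nat.add_assoc]
lemma D1_pow_C (n k : ℕ) : (D1 ^ n) (sng (.C k)) = sng (.C (k + n)) := by
  induction n with
  | zero => simp
  | succ n ih => rw [pow_succ', Module.End.mul_apply, ih]; simp [D1, sng, d1, Nat.add_assoc]

/-- Images of the generators. -/
def gmap : Gamma → M
  | .e1 => sng .E1
  | .e11 => sng (.A 0)
  | .e2 => sng .E2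
  | .e22 => sng (.B 0)
  | .e12 => sng (.C 0)

def phi : FL →ₗ⁅ℚ⁆ M := FreeLieAlgebra.lift ℚ gmap

lemma phi_gen (x : Gamma) : phi (gen x) = gmap x := FreeLieAlgebra.lift_of_apply gmap x

lemma phi_rel : ∀ r ∈ relSet, phi r = 0 := by
  have e12c : ⁅(sng .E2 : M), sng (.C 0)⁆ - ⁅(sng .E1 : M), sng (.C 0)⁆ = 0 := by
    rw [lie_e1, lie_e2, D1_sng, D2_sng]; simp [d1, d2]
  intro r hr
  rcases hr with rfl | rfl | rfl | rfl | rfl | rfl <;>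
    simp only [map_sub, map_neg, LieHom.map_lie, phi_gen, gmap, sub_lie]
  · rw [lie_e1, D1_sng]; simp [d1]
  · rw [← lie_skew, lie_e2, D2_sng]; simp [d2]
  · rw [lie_e1, D1_sng]; simp [d1]
  · rw [lie_low (sng (.A 0)) (sng (.B 0)) (by simp [c1_sng]) (by simp [c2_sng])
      (by simp [c1_sng]) (by simp [c2_sng]), e12c]; simp
  · rw [lie_low (sng (.A 0)) (sng (.C 0)) (by simp [c1_sng]) (by simp [c2_sng])
      (by simp [c1_sng]) (by simp [c2_sng]), e12c]; simp
  · rw [lie_low (sng (.B 0)) (sng (.C 0)) (by simp [c1_sng]) (by simp [c2_sng])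
      (by simp [c1_sng]) (by simp [c2_sng]), e12c]; simp

lemma rel_le_ker : relIdeal ≤ phi.ker :=
  LieSubmodule.lieSpan_le.mpr fun r hr => LieHom.mem_ker.mpr (phi_rel r hr)

/-- The induced map on `L`. -/
def psi : Lquot →ₗ⁅ℚ⁆ M where
  toLinearMap := Submodule.liftQ relIdeal.toSubmodule phi.toLinearMap
    (fun x hx => LieHom.mem_ker.mp (rel_le_ker hx))
  map_lie' := by rintro ⟨x⟩ ⟨y⟩; exact phi.map_lie x y

lemma psi_mk (x : FL) : psi (mkL x) = phi x := rfl

def Psub : Submodule ℚ M := LinearMap.ker c1 ⊓ LinearMap.ker c2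
lemma mem_Psub {m : M} : m ∈ Psub ↔ c1 m = 0 ∧ c2 m = 0 := by
  simp [Psub, LinearMap.mem_ker]

def P : LieIdeal ℚ M :=
  { Psub with lie_mem := fun {x m} _ => mem_Psub.mpr ⟨c1_br x m, c2_br x m⟩ }

lemma mem_P {m : M} : m ∈ P ↔ c1 m = 0 ∧ c2 m = 0 := mem_Psub

lemma N_le : NIdeal ≤ LieIdeal.comap psi P := by
  apply LieSubmodule.lieSpan_le.mpr
  intro x hx
  rcases hx with rfl | rfl | rfl <;>
    · rw [SetLike.mem_coe, LieIdeal.mem_comap, psi_mk, phi_gen]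
      exact mem_P.mpr ⟨by simp [gmap, c1_sng], by simp [gmap, c2_sng]⟩

lemma NN_le_ker : NN ≤ psi.ker := by
  rw [NN, LieSubmodule.lieIdeal_oper_eq_span, LieSubmodule.lieSpan_le]
  rintro z ⟨⟨x, hx⟩, ⟨y, hy⟩, rfl⟩
  rw [SetLike.mem_coe]
  have px := LieIdeal.mem_comap.mp (N_le hx)
  have py := LieIdeal.mem_comap.mp (N_le hy)
  rw [LieHom.mem_ker, LieHom.map_lie]
  exact lie_low _ _ (mem_P.mp px).1 (mem_P.mp px).2 (mem_P.mp py).1 (mem_P.mp py).2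

/-- The induced map on `L^PL`. -/
def theta : LPL →ₗ⁅ℚ⁆ M where
  toLinearMap := Submodule.liftQ NN.toSubmodule psi.toLinearMap
    (fun x hx => LieHom.mem_ker.mp (NN_le_ker hx))
  map_lie' := by rintro ⟨x⟩ ⟨y⟩; exact psi.map_lie x y

lemma theta_pl (x : FL) : theta (pl x) = phi x := rfl

lemma hom_adpow {L L' : Type*} [LieRing L] [LieAlgebra ℚ L] [LieRing L'] [LieAlgebra ℚ L']
    (f : L →ₗ⁅ℚ⁆ L') (x y : L) (n : ℕ) :
    f ((LieAlgebra.ad ℚ L x ^ n) y) = (LieAlgebra.ad ℚ L' (f x) ^ n) (f y) := by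
  induction n generalizing y with
  | zero => simp
  | succ n ih =>
    rw [pow_succ', Module.End.mul_apply, pow_succ', Module.End.mul_apply,
      LieAlgebra.ad_apply, LieAlgebra.ad_apply, ← ih, ← LieHom.map_lie]

lemma theta_fam (i : BIdx) : theta (basisFam i) = sng i := by
  cases i with
  | E1 => exact (phi_gen .e1)
  | E2 => exact (phi_gen .e2)
  | A n =>
    show theta ((LieAlgebra.ad ℚ LPL E1 ^ n) E11) = _
    rw [hom_adpow, show theta E1 = sng .E1 from phi_gen .e1, show theta E11 = sng (.A 0) from phi_gen .e11]
    rw [ad_e1, D1_pow_A]; simp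
  | B n =>
    show theta ((LieAlgebra.ad ℚ LPL E2 ^ n) E22) = _
    rw [hom_adpow, show theta E2 = sng .E2 from phi_gen .e2, show theta E22 = sng (.B 0) from phi_gen .e22]
    rw [ad_e2, D2_pow_B]; simp
  | C n =>
    show theta ((LieAlgebra.ad ℚ LPL E1 ^ n) E12) = _
    rw [hom_adpow, show theta E1 = sng .E1 from phi_gen .e1, show theta E12 = sng (.C 0) from phi_gen .e12]
    rw [ad_e1, D1_pow_C]; simp

lemma li : LinearIndependent ℚ basisFam := by
  apply LinearIndependent.of_comp theta.toLinearMap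
  have h : (theta.toLinearMap ∘ basisFam) = fun i => sng i := funext theta_fam
  rw [h]
  have := (Finsupp.basisSingleOne (R := ℚ) (ι := BIdx)).linearIndependent
  simpa [sng] using this

/-! ### Spanning -/

def pi1 : FL →ₗ⁅ℚ⁆ Lquot where
  toLinearMap := relIdeal.toSubmodule.mkQ
  map_lie' := fun {x y} => rfl

def pi2 : Lquot →ₗ⁅ℚ⁆ LPL where
  toLinearMap := NN.toSubmodule.mkQ
  map_lie' := by rintro ⟨x⟩ ⟨y⟩; rfl

lemma pi1_eq (x : FL) : pi1 x = mkL x := rfl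
lemma pi2_pl (x : FL) : pi2 (mkL x) = pl x := rfl

lemma mk_rel (r : FL) (hr : r ∈ relSet) : mkL r = 0 :=
  (LieSubmodule.Quotient.mk_eq_zero').mpr (LieSubmodule.subset_lieSpan hr)

lemma lie_pl (x y : FL) : ⁅pl x, pl y⁆ = pl ⁅x, y⁆ := rfl

lemma lie_E1_E2 : ⁅E1, E2⁆ = 0 := by
  show pi2 (pi1 ⁅gen .e1, gen .e2⁆) = 0
  rw [pi1_eq, mk_rel _ (by simp [relSet]), map_zero]

lemma lie_E2_E11 : ⁅E2, E11⁆ = 0 := by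
  have h : ⁅E11, E2⁆ = 0 := by
    show pi2 (pi1 ⁅gen .e11, gen .e2⁆) = 0
    rw [pi1_eq, mk_rel _ (by simp [relSet]), map_zero]
  rw [← lie_skew, h, neg_zero]

lemma lie_E1_E22 : ⁅E1, E22⁆ = 0 := by
  show pi2 (pi1 ⁅gen .e1, gen .e22⁆) = 0
  rw [pi1_eq, mk_rel _ (by simp [relSet]), map_zero]

lemma mem_N_e11 : mkL (gen .e11) ∈ NIdeal := LieSubmodule.subset_lieSpan (by simp)
lemma mem_N_e22 : mkL (gen .e22) ∈ NIdeal := LieSubmodule.subset_lieSpan (by simp)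
lemma mem_N_e12 : mkL (gen .e12) ∈ NIdeal := LieSubmodule.subset_lieSpan (by simp)

lemma pi2_NN {x : Lquot} (hx : x ∈ NN) : pi2 x = 0 :=
  (LieSubmodule.Quotient.mk_eq_zero').mpr hx

lemma lie_E2_E12 : ⁅E2, E12⁆ = ⁅E1, E12⁆ := by
  have h4 : mkL (⁅gen .e11, gen .e22⁆ - ⁅gen .e2 - gen .e1, gen .e12⁆) = 0 :=
    mk_rel _ (by simp [relSet])
  have h4' : ⁅mkL (gen .e11), mkL (gen .e22)⁆
      - ⁅mkL (gen .e2) - mkL (gen .e1), mkL (gen .e12)⁆ = 0 := by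
    rw [show ⁅mkL (gen .e11), mkL (gen .e22)⁆
      - ⁅mkL (gen .e2) - mkL (gen .e1), mkL (gen .e12)⁆
      = pi1 (⁅gen .e11, gen .e22⁆ - ⁅gen .e2 - gen .e1, gen .e12⁆) from by
        simp only [map_sub, LieHom.map_lie]; rfl]
    exact h4
  have h5 : ⁅mkL (gen .e2) - mkL (gen .e1), mkL (gen .e12)⁆
      = ⁅mkL (gen .e11), mkL (gen .e22)⁆ := (sub_eq_zero.mp h4').symm
  have h6 : pi2 ⁅mkL (gen .e2) - mkL (gen .e1), mkL (gen .e12)⁆ = 0 := by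
    rw [h5]; exact pi2_NN (LieSubmodule.lie_mem_lie mem_N_e11 mem_N_e22)
  rw [LieHom.map_lie, map_sub, sub_lie] at h6
  exact sub_eq_zero.mp h6

lemma comm_ad : Commute (adPL E1) (adPL E2) := by
  letI : LieRing (Module.End ℚ LPL) := LieRing.ofAssociativeRing
  have h := LieHom.map_lie (LieAlgebra.ad ℚ LPL) E1 E2
  rw [lie_E1_E2, map_zero, Ring.lie_def] at h
  exact (sub_eq_zero.mp h.symm)

lemma adPL_apply (z w : LPL) : adPL z w = ⁅z, w⁆ := rfl

lemma kA1 (n : ℕ) : ⁅E1, basisFam (.A n)⁆ = basisFam (.A (n+1)) := by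
  show ⁅E1, (adPL E1 ^ n) E11⁆ = (adPL E1 ^ (n+1)) E11
  rw [pow_succ', Module.End.mul_apply]; rfl

lemma kC1 (n : ℕ) : ⁅E1, basisFam (.C n)⁆ = basisFam (.C (n+1)) := by
  show ⁅E1, (adPL E1 ^ n) E12⁆ = (adPL E1 ^ (n+1)) E12
  rw [pow_succ', Module.End.mul_apply]; rfl

lemma kB2 (n : ℕ) : ⁅E2, basisFam (.B n)⁆ = basisFam (.B (n+1)) := by
  show ⁅E2, (adPL E2 ^ n) E22⁆ = (adPL E2 ^ (n+1)) E22
  rw [pow_succ', Module.End.mul_apply]; rfl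

lemma kA2 (n : ℕ) : ⁅E2, basisFam (.A n)⁆ = 0 := by
  show adPL E2 ((adPL E1 ^ n) E11) = 0
  rw [← Module.End.mul_apply, (comm_ad.symm.pow_right n).eq, Module.End.mul_apply,
    adPL_apply, lie_E2_E11, map_zero]

lemma kB1 (n : ℕ) : ⁅E1, basisFam (.B n)⁆ = 0 := by
  show adPL E1 ((adPL E2 ^ n) E22) = 0
  rw [← Module.End.mul_apply, (comm_ad.pow_right n).eq, Module.End.mul_apply,
    adPL_apply, lie_E1_E22, map_zero]

lemma kC2 (n : ℕ) : ⁅E2, basisFam (.C n)⁆ = basisFam (.C (n+1)) := by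
  show adPL E2 ((adPL E1 ^ n) E12) = (adPL E1 ^ (n+1)) E12
  rw [← Module.End.mul_apply, (comm_ad.symm.pow_right n).eq, Module.End.mul_apply,
    adPL_apply, lie_E2_E12, pow_succ, Module.End.mul_apply]; rfl

/-- Lifts of the basis elements to `L`. -/
def tilde : BIdx → Lquot
  | .E1 => mkL (gen .e1)
  | .E2 => mkL (gen .e2)
  | .A n => (LieAlgebra.ad ℚ Lquot (mkL (gen .e1)) ^ n) (mkL (gen .e11))
  | .B n => (LieAlgebra.ad ℚ Lquot (mkL (gen .e2)) ^ n) (mkL (gen .e22))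
  | .C n => (LieAlgebra.ad ℚ Lquot (mkL (gen .e1)) ^ n) (mkL (gen .e12))

lemma pi2_tilde (i : BIdx) : pi2 (tilde i) = basisFam i := by
  cases i <;> simp only [tilde, basisFam, hom_adpow, pi2_pl] <;> rfl

lemma ad_pow_mem (x y : Lquot) (hy : y ∈ NIdeal) (n : ℕ) :
    (LieAlgebra.ad ℚ Lquot x ^ n) y ∈ NIdeal := by
  induction n with
  | zero => simpa using hy
  | succ n ih =>
    rw [pow_succ', Module.End.mul_apply, LieAlgebra.ad_apply]
    exact NIdeal.lie_mem ih

lemma tilde_mem : ∀ n : ℕ, (tilde (.A n) ∈ NIdeal) ∧ (tilde (.B n) ∈ NIdeal)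
    ∧ (tilde (.C n) ∈ NIdeal) := fun n =>
  ⟨ad_pow_mem _ _ mem_N_e11 n, ad_pow_mem _ _ mem_N_e22 n, ad_pow_mem _ _ mem_N_e12 n⟩

lemma lie_N_zero {x y : Lquot} (hx : x ∈ NIdeal) (hy : y ∈ NIdeal) :
    ⁅pi2 x, pi2 y⁆ = 0 := by
  rw [← LieHom.map_lie]
  exact pi2_NN (LieSubmodule.lie_mem_lie hx hy)

abbrev S : Submodule ℚ LPL := Submodule.span ℚ (Set.range basisFam)

lemma hmem (i : BIdx) : basisFam i ∈ S := Submodule.subset_span ⟨i, rfl⟩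

lemma lie_closed (i j : BIdx) : ⁅basisFam i, basisFam j⁆ ∈ S := by
  have hNN : ∀ i j : BIdx, (tilde i ∈ NIdeal) → (tilde j ∈ NIdeal) →
      ⁅basisFam i, basisFam j⁆ ∈ S := fun i j hi hj => by
    rw [← pi2_tilde, ← pi2_tilde, lie_N_zero hi hj]; exact S.zero_mem
  have skew : ∀ i j : BIdx, ⁅basisFam i, basisFam j⁆ ∈ S → ⁅basisFam j, basisFam i⁆ ∈ S :=
    fun i j h => by rw [← lie_skew]; exact S.neg_mem h
  cases i with
  | E1 =>
    cases j with
    | E1 => show ⁅E1, E1⁆ ∈ S; rw [lie_self]; exact S.zero_mem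
    | E2 => show ⁅E1, E2⁆ ∈ S; rw [lie_E1_E2]; exact S.zero_mem
    | A n => rw [show basisFam .E1 = E1 from rfl, kA1]; exact hmem _
    | B n => rw [show basisFam .E1 = E1 from rfl, kB1]; exact S.zero_mem
    | C n => rw [show basisFam .E1 = E1 from rfl, kC1]; exact hmem _
  | E2 =>
    cases j with
    | E1 => exact skew _ _ (by show ⁅E1, E2⁆ ∈ S; rw [lie_E1_E2]; exact S.zero_mem)
    | E2 => show ⁅E2, E2⁆ ∈ S; rw [lie_self]; exact S.zero_mem
    | A n => rw [show basisFam .E2 = E2 from rfl, kA2]; exact S.zero_mem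
    | B n => rw [show basisFam .E2 = E2 from rfl, kB2]; exact hmem _
    | C n => rw [show basisFam .E2 = E2 from rfl, kC2]; exact hmem _
  | A m =>
    cases j with
    | E1 => exact skew _ _ (by rw [show basisFam .E1 = E1 from rfl, kA1]; exact hmem _)
    | E2 => exact skew _ _ (by rw [show basisFam .E2 = E2 from rfl, kA2]; exact S.zero_mem)
    | A n => exact hNN _ _ (tilde_mem m).1 (tilde_mem n).1
    | B n => exact hNN _ _ (tilde_mem m).1 (tilde_mem n).2.1
    | C n => exact hNN _ _ (tilde_mem m).1 (tilde_mem n).2.2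
  | B m =>
    cases j with
    | E1 => exact skew _ _ (by rw [show basisFam .E1 = E1 from rfl, kB1]; exact S.zero_mem)
    | E2 => exact skew _ _ (by rw [show basisFam .E2 = E2 from rfl, kB2]; exact hmem _)
    | A n => exact hNN _ _ (tilde_mem m).2.1 (tilde_mem n).1
    | B n => exact hNN _ _ (tilde_mem m).2.1 (tilde_mem n).2.1
    | C n => exact hNN _ _ (tilde_mem m).2.1 (tilde_mem n).2.2
  | C m =>
    cases j with
    | E1 => exact skew _ _ (by rw [show basisFam .E1 = E1 from rfl, kC1]; exact hmem _)
    | E2 => exact skew _ _ (by rw [show basisFam .E2 = E2 from rfl, kC2]; exact hmem _)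
    | A n => exact hNN _ _ (tilde_mem m).2.2 (tilde_mem n).1
    | B n => exact hNN _ _ (tilde_mem m).2.2 (tilde_mem n).2.1
    | C n => exact hNN _ _ (tilde_mem m).2.2 (tilde_mem n).2.2

lemma S_lie_closed {x y : LPL} (hx : x ∈ S) (hy : y ∈ S) : ⁅x, y⁆ ∈ S := by
  induction hy using Submodule.span_induction with
  | mem z hz =>
    obtain ⟨j, rfl⟩ := hz
    induction hx using Submodule.span_induction with
    | mem w hw => obtain ⟨i, rfl⟩ := hw; exact lie_closed i j
    | zero => rw [zero_lie]; exact S.zero_mem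
    | add a b _ _ ha hb => rw [add_lie]; exact S.add_mem ha hb
    | smul t a _ ha => rw [smul_lie]; exact S.smul_mem t ha
  | zero => rw [lie_zero]; exact S.zero_mem
  | add a b _ _ ha hb => rw [lie_add]; exact S.add_mem ha hb
  | smul t a _ ha => rw [lie_smul]; exact S.smul_mem t ha

def K : LieSubalgebra ℚ LPL := { S with lie_mem' := fun hx hy => S_lie_closed hx hy }

lemma gen_mem (x : Gamma) : pl (gen x) ∈ K := by
  cases x with
  | e1 => exact hmem .E1
  | e2 => exact hmem .E2
  | e11 =>
    have : basisFam (.A 0) = pl (gen .e11) := by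
      show (adPL E1 ^ 0) E11 = E11; rw [pow_zero, Module.End.one_apply]
    rw [← this]; exact hmem _
  | e22 =>
    have : basisFam (.B 0) = pl (gen .e22) := by
      show (adPL E2 ^ 0) E22 = E22; rw [pow_zero, Module.End.one_apply]
    rw [← this]; exact hmem _
  | e12 =>
    have : basisFam (.C 0) = pl (gen .e12) := by
      show (adPL E1 ^ 0) E12 = E12; rw [pow_zero, Module.End.one_apply]
    rw [← this]; exact hmem _

def rho : FL →ₗ⁅ℚ⁆ LPL := pi2.comp pi1

def fK : FL →ₗ⁅ℚ⁆ K := FreeLieAlgebra.lift ℚ fun x => (⟨pl (gen x), gen_mem x⟩ : K)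

lemma fK_comp : ∀ w : FL, (K.incl (fK w) : LPL) = rho w := by
  have h : K.incl.comp fK = rho := FreeLieAlgebra.hom_ext fun x => by
    show K.incl (fK (gen x)) = rho (gen x)
    rw [show fK (gen x) = ⟨pl (gen x), gen_mem x⟩ from FreeLieAlgebra.lift_of_apply _ x]
    rfl
  intro w
  exact LieHom.congr_fun h w

lemma span_top : S = ⊤ := by
  rw [Submodule.eq_top_iff']
  intro z
  have hsurj : ∃ w : FL, rho w = z := by
    obtain ⟨y, rfl⟩ := LieSubmodule.Quotient.surjective_mk' NN z
    obtain ⟨x, rfl⟩ := LieSubmodule.Quotient.surjective_mk' relIdeal y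
    exact ⟨x, rfl⟩
  obtain ⟨w, rfl⟩ := hsurj
  rw [← fK_comp w]
  exact (fK w).2

end
end PLProof

theorem stmt3 :
    Function.Injective basisFam ∧ LinearIndependent ℚ basisFam ∧
      Submodule.span ℚ (Set.range basisFam) = ⊤ := by
  refine ⟨PLProof.li.injective, PLProof.li, PLProof.span_top⟩
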